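/- Let n points z^1,…,z^n ∈ ℝ with an honest subset H of size h = n − b, b < n/2, and z̄ the honest mean. Suppose ‖z^j − z̄‖ ≤ ζ for all j ∈ H. The b-trimmed mean (remove b largest and b smallest, average the remaining n − 2b) satisfies (trimean − z̄)² ≤ (2b(n−b)/(n−2b)²) ζ² = (2α(1−α)/(1−2α)²) ζ², where α = b/n. -/

import Mathlib

/-!
Sort the points and centre them at `z̄`. At most `b` points are dishonest, so the dishonest points
kept by the trimming can be matched with honest points among the `b` largest, which are at least as
large. Hence the kept sum is at most a sum over `n - 2b` honest points; since the honest centred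
values sum to `0` and are each `≥ -ζ`, this is at most `bζ`. The symmetric argument with the `b`
smallest points gives `|trimean - z̄| ≤ bζ / (n - 2b)`, and `b² ≤ 2b(n - b)` because `2b < n`.
-/

open Finset

section Exchange

variable {ι M : Type*} [AddCommGroup M] [LinearOrder M] [IsOrderedAddMonoid M]

theorem exists_subset_card_eq_sum_le (f : ι → M) {A B : Finset ι}
    (hle : ∀ a ∈ A, ∀ p ∈ B, f a ≤ f p) (hcard : #A ≤ #B) :
    ∃ P ⊆ B, #P = #A ∧ ∑ a ∈ A, f a ≤ ∑ p ∈ P, f p := by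
  obtain ⟨P, hPB, hPA⟩ := exists_subset_card_eq hcard
  refine ⟨P, hPB, hPA, ?_⟩
  rcases A.eq_empty_or_nonempty with rfl | hA
  · simp_all
  calc ∑ a ∈ A, f a ≤ #A • A.sup' hA f := sum_le_card_nsmul _ _ _ fun a ha => le_sup' f ha
    _ = #P • A.sup' hA f := by rw [hPA]
    _ ≤ ∑ p ∈ P, f p :=
      card_nsmul_le_sum _ _ _ fun p hp => sup'_le hA f fun a ha => hle a ha p (hPB hp)

theorem card_sdiff_le_card_inter [Fintype ι] [DecidableEq ι] {R B K : Finset ι}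
    (hRB : Disjoint R B) (hB : #Kᶜ ≤ #B) : #(R \ K) ≤ #(B ∩ K) := by
  have hsub : R \ K ∪ B \ K ⊆ Kᶜ := by
    intro i; simp only [mem_union, mem_sdiff, mem_compl]; tauto
  have := card_le_card hsub
  rw [card_union_of_disjoint (hRB.mono sdiff_subset sdiff_subset)] at this
  have := card_inter_add_card_sdiff B K
  omega

/-- Trading the points of `R` outside `K` for larger ones in `B ∩ K` bounds the sum over `R` by a
sum over `#R` points of `K`; on `K` the shifted values `f + ζ` are nonnegative with total `#K • ζ`. -/
theorem sum_add_card_nsmul_le [Fintype ι] [DecidableEq ι] (f : ι → M) (ζ : M)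
    {R B K : Finset ι} (hRB : Disjoint R B) (hB : #Kᶜ ≤ #B)
    (hle : ∀ a ∈ R, ∀ p ∈ B, f a ≤ f p)
    (hsum : ∑ j ∈ K, f j = 0) (hlow : ∀ j ∈ K, -ζ ≤ f j) :
    ∑ i ∈ R, f i + #R • ζ ≤ #K • ζ := by
  obtain ⟨P, hPB, hPcard, hPsum⟩ := exists_subset_card_eq_sum_le f
    (fun a ha p hp => hle a (mem_sdiff.mp ha).1 p (mem_inter.mp hp).1)
    (card_sdiff_le_card_inter hRB hB)
  have hdisj : Disjoint (R ∩ K) P :=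
    hRB.mono inter_subset_left (hPB.trans inter_subset_left)
  set Q := R ∩ K ∪ P
  have hQK : Q ⊆ K := union_subset inter_subset_right (hPB.trans inter_subset_right)
  have hQcard : #Q = #R := by
    rw [card_union_of_disjoint hdisj, hPcard, card_inter_add_card_sdiff]
  have hRQ : ∑ i ∈ R, f i ≤ ∑ i ∈ Q, f i := by
    rw [sum_union hdisj, ← sum_inter_add_sum_sdiff R K f]
    exact add_le_add_right hPsum _
  calc ∑ i ∈ R, f i + #R • ζ ≤ ∑ i ∈ Q, (f i + ζ) := by
        rw [sum_add_distrib, sum_const, hQcard]; exact add_le_add_left hRQ _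
    _ ≤ ∑ j ∈ K, (f j + ζ) :=
        sum_le_sum_of_subset_of_nonneg hQK fun j hj _ => neg_le_iff_add_nonneg.mp (hlow j hj)
    _ = #K • ζ := by rw [sum_add_distrib, hsum, sum_const, zero_add]

end Exchange

def valIco (n a c : ℕ) : Finset (Fin n) :=
  Finset.univ.filter (fun i : Fin n => a ≤ i.val ∧ i.val < c)

theorem card_valIco {n c : ℕ} (a : ℕ) (hc : c ≤ n) : #(valIco n a c) = c - a := by
  rw [← card_map Fin.valEmbedding, ← Nat.card_Ico a c]
  congr 1
  ext m
  simp only [valIco, mem_map, mem_filter, mem_univ, true_and, Fin.valEmbedding_apply, mem_Ico]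
  exact ⟨fun ⟨i, hi, him⟩ => him ▸ hi, fun hm => ⟨⟨m, by omega⟩, hm, rfl⟩⟩

theorem lt_of_mem_valIco {n a c a' c' : ℕ} (hc : c ≤ a') {i j : Fin n}
    (hi : i ∈ valIco n a c) (hj : j ∈ valIco n a' c') : i < j := by
  simp only [valIco, mem_filter, mem_univ, true_and] at hi hj
  exact Fin.lt_def.mpr (by omega)

theorem disjoint_valIco {n a c a' c' : ℕ} (hc : c ≤ a') :
    Disjoint (valIco n a c) (valIco n a' c') :=
  disjoint_left.mpr fun _ hi hj => lt_irrefl _ (lt_of_mem_valIco hc hi hj)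

theorem abs_sum_valIco_sub_le {n b : ℕ} (hb : 2 * b ≤ n) {w : Fin n → ℝ} (hw : Monotone w)
    {K : Finset (Fin n)} (hK : #K = n - b) {c ζ : ℝ} (hsum : ∑ j ∈ K, (w j - c) = 0)
    (hdev : ∀ j ∈ K, |w j - c| ≤ ζ) :
    |∑ i ∈ valIco n b (n - b), (w i - c)| ≤ b * ζ := by
  set R := valIco n b (n - b)
  have hflip (s : Finset (Fin n)) : ∑ i ∈ s, (c - w i) = -∑ i ∈ s, (w i - c) := by
    rw [← sum_neg_distrib]; simp only [neg_sub]
  have hKcompl : #Kᶜ = b := by rw [card_compl, hK, Fintype.card_fin]; omega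
  have hupper : ∑ i ∈ R, (w i - c) + #R • ζ ≤ #K • ζ :=
    sum_add_card_nsmul_le (fun i => w i - c) ζ (disjoint_valIco le_rfl)
      (by rw [hKcompl, card_valIco _ le_rfl]; omega)
      (fun a ha p hp => sub_le_sub_right (hw (lt_of_mem_valIco le_rfl ha hp).le) _)
      hsum (fun j hj => neg_le_of_abs_le (hdev j hj))
  have hlower : ∑ i ∈ R, (c - w i) + #R • ζ ≤ #K • ζ :=
    sum_add_card_nsmul_le (fun i => c - w i) ζ (disjoint_valIco le_rfl).symm
      (by rw [hKcompl, card_valIco 0 (by omega : b ≤ n)]; omega)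
      (fun a ha p hp => sub_le_sub_left (hw (lt_of_mem_valIco le_rfl hp ha).le) _)
      (by rw [hflip, hsum, neg_zero])
      (fun j hj => neg_le_of_abs_le (abs_sub_comm (w j) c ▸ hdev j hj))
  have hKR : #K • ζ = #R • ζ + b * ζ := by
    rw [hK, card_valIco b (by omega), ← nsmul_eq_mul, ← add_nsmul]; congr 1; omega
  rw [abs_le]
  constructor <;> linarith [hflip R]

theorem sq_div_le_of_abs_le {S b n ζ : ℝ} (hb0 : 0 ≤ b) (hbn : 2 * b < n) (hS : |S| ≤ b * ζ) :
    (S / (n - 2 * b)) ^ 2 ≤ 2 * b * (n - b) / (n - 2 * b) ^ 2 * ζ ^ 2 := by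
  have hSsq : S ^ 2 ≤ (b * ζ) ^ 2 := sq_le_sq' (abs_le.mp hS).1 (abs_le.mp hS).2
  have : S ^ 2 ≤ 2 * b * (n - b) * ζ ^ 2 := by
    nlinarith [mul_nonneg (mul_nonneg hb0 (by linarith : 0 ≤ 2 * n - 3 * b)) (sq_nonneg ζ)]
  rw [div_pow, div_mul_eq_mul_div]
  gcongr

theorem two_mul_mul_sub_div_sq_eq {b n : ℝ} (hn : n ≠ 0) :
    2 * b * (n - b) / (n - 2 * b) ^ 2 = 2 * (b / n) * (1 - b / n) / (1 - 2 * (b / n)) ^ 2 := by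
  rw [one_sub_div hn, show 1 - 2 * (b / n) = (n - 2 * b) / n by field_simp, div_pow,
    div_div_eq_mul_div]
  congr 1
  field_simp

theorem stmt15_general (n b : ℕ) (hb : 2 * b < n)
    (z : Fin n → ℝ) (H : Finset (Fin n)) (hH : H.card = n - b)
    (zbar ζ α : ℝ)
    (hzbar : zbar = (∑ j ∈ H, z j) / ((n - b : ℕ) : ℝ))
    (hdev : ∀ j ∈ H, |z j - zbar| ≤ ζ)
    (hα : α = (b : ℝ) / n)
    (σ : Equiv.Perm (Fin n)) (hmono : Monotone (fun i => z (σ i)))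
    (trimean : ℝ)
    (htm : trimean =
      (∑ i ∈ Finset.univ.filter (fun i : Fin n => b ≤ i.val ∧ i.val < n - b), z (σ i))
        / ((n - 2 * b : ℕ) : ℝ)) :
    (trimean - zbar) ^ 2 ≤ 2 * (b : ℝ) * ((n : ℝ) - b) / ((n : ℝ) - 2 * b) ^ 2 * ζ ^ 2 ∧
      2 * (b : ℝ) * ((n : ℝ) - b) / ((n : ℝ) - 2 * b) ^ 2 =
        2 * α * (1 - α) / (1 - 2 * α) ^ 2 := by
  set K := H.map σ.symm.toEmbedding
  have hsum : ∑ j ∈ K, (z (σ j) - zbar) = 0 := by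
    have : ((n - b : ℕ) : ℝ) ≠ 0 := by norm_cast; omega
    simp only [K, sum_map, Equiv.coe_toEmbedding, Equiv.apply_symm_apply, sum_sub_distrib,
      sum_const, card_map, hH, nsmul_eq_mul, hzbar]
    field_simp
    ring
  have hdevK : ∀ j ∈ K, |z (σ j) - zbar| ≤ ζ := by
    intro j hj
    obtain ⟨i, hi, rfl⟩ := mem_map.mp hj
    simpa using hdev i hi
  have hbound := abs_sum_valIco_sub_le hb.le hmono (by rw [card_map, hH]) hsum hdevK
  have hcast : ((n - 2 * b : ℕ) : ℝ) = n - 2 * b := by rw [Nat.cast_sub hb.le]; push_cast; ring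
  have htrim : trimean - zbar = (∑ i ∈ valIco n b (n - b), (z (σ i) - zbar)) / (n - 2 * b) := by
    have hne : (n : ℝ) - 2 * b ≠ 0 := by rw [← hcast]; norm_cast; omega
    rw [htm, hcast, eq_div_iff hne, sub_mul, div_mul_cancel₀ _ hne, sum_sub_distrib, sum_const,
      card_valIco b (by omega), nsmul_eq_mul, Nat.cast_sub (by omega), Nat.cast_sub (by omega)]
    simp only [valIco]
    ring
  exact ⟨htrim ▸ sq_div_le_of_abs_le b.cast_nonneg (by exact_mod_cast hb) hbound,
    hα ▸ two_mul_mul_sub_div_sq_eq (by norm_cast; omega)⟩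

/-- Robust-boundedness of the scalar `b`-trimmed mean. -/
theorem stmt15 (n b : ℕ) (hb : 2 * b < n)
    (z : Fin n → ℝ) (H : Finset (Fin n)) (hH : H.card = n - b)
    (zbar ζ α : ℝ)
    (hzbar : zbar = (∑ j ∈ H, z j) / ((n - b : ℕ) : ℝ))
    (hζ0 : 0 ≤ ζ)
    (hdev : ∀ j ∈ H, |z j - zbar| ≤ ζ)
    (hα : α = (b : ℝ) / n)
    (σ : Equiv.Perm (Fin n)) (hmono : Monotone (fun i => z (σ i)))
    (trimean : ℝ)
    (htm : trimean =
      (∑ i ∈ Finset.univ.filter (fun i : Fin n => b ≤ i.val ∧ i.val < n - b), z (σ i))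
        / ((n - 2 * b : ℕ) : ℝ)) :
    (trimean - zbar) ^ 2 ≤ 2 * (b : ℝ) * ((n : ℝ) - b) / ((n : ℝ) - 2 * b) ^ 2 * ζ ^ 2 ∧
      2 * (b : ℝ) * ((n : ℝ) - b) / ((n : ℝ) - 2 * b) ^ 2 =
        2 * α * (1 - α) / (1 - 2 * α) ^ 2 :=
  stmt15_general n b hb z H hH zbar ζ α hzbar hdev hα σ hmono trimean htm
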